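/- Let ν, μ > 0, d a positive integer, and define c_n = (1/B(ν,μ)) ((d/2)_n / n!) ∫_0^1 t^{μ+d/2-1} (1-t)^{ν+d/2-1} (1 - t + t²)^n dt for n ≥ 0. Then each c_n ≥ 0 and ∑_{n=0}^∞ c_n = 1. -/

import Mathlib

/-!
Write `a = d / 2`. Since `1 - (1 - t + t²) = t (1 - t)`, the binomial series
`∑ (a)ₙ / n! xⁿ = (1 - x)^(-a)` at `x = 1 - t + t²` turns the summed integrands into the Beta
density `t^(μ-1) (1-t)^(ν-1)`. All terms are nonnegative, so sum and integral may be exchanged,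
and the total is `B(μ, ν) / B(ν, μ) = 1`.
-/

open Real MeasureTheory
open scoped Nat Interval

theorem ascPochhammer_eval_div_factorial {K : Type*} [Field K] [CharZero K] (a : K) (n : ℕ) :
    (ascPochhammer K n).eval a / n ! = Ring.choose (a + n - 1) n := by
  rw [Ring.choose_eq_smul, Polynomial.descPochhammer_smeval_eq_ascPochhammer,
    show a + n - 1 - n + 1 = a by ring, Polynomial.ascPochhammer_smeval_eq_eval,
    smul_eq_mul, div_eq_inv_mul]

theorem ascPochhammer_eval_nonneg {S : Type*} [Semiring S] [PartialOrder S]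
    [IsStrictOrderedRing S] (n : ℕ) {s : S} (hs : 0 ≤ s) :
    0 ≤ (ascPochhammer S n).eval s := by
  induction n with
  | zero => simp
  | succ n ih => rw [ascPochhammer_succ_eval]; positivity

theorem hasSum_ascPochhammer_div_factorial_mul_pow (a : ℝ) {x : ℝ} (hx : |x| < 1) :
    HasSum (fun n => (ascPochhammer ℝ n).eval a / n ! * x ^ n) ((1 - x) ^ (-a)) := by
  have hx' : x ∈ Metric.eball (0 : ℝ) 1 := by
    rw [Metric.mem_eball, edist_zero_right, ← ofReal_norm, ENNReal.ofReal_lt_one]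
    exact hx
  have h := (one_div_one_sub_rpow_hasFPowerSeriesOnBall_zero a).hasSum hx'
  simp only [FormalMultilinearSeries.ofScalars_apply_eq, smul_eq_mul, zero_add] at h
  rw [rpow_neg (by linarith [le_abs_self x]), inv_eq_one_div]
  simpa only [ascPochhammer_eval_div_factorial] using h

theorem intervalIntegral.hasSum_integral_of_nonneg {ι : Type*} [Countable ι] {a b : ℝ}
    {μ : Measure ℝ} {F : ι → ℝ → ℝ} {f : ℝ → ℝ}
    (hF_meas : ∀ n, AEStronglyMeasurable (F n) (μ.restrict (Ι a b)))
    (hF_nonneg : ∀ n, ∀ᵐ t ∂μ, t ∈ Ι a b → 0 ≤ F n t)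
    (hf : IntervalIntegrable f μ a b)
    (h_lim : ∀ᵐ t ∂μ, t ∈ Ι a b → HasSum (fun n => F n t) (f t)) :
    HasSum (fun n => ∫ t in a..b, F n t ∂μ) (∫ t in a..b, f t ∂μ) := by
  refine hasSum_integral_of_dominated_convergence F hF_meas ?_ ?_ ?_ h_lim
  · exact fun n => (hF_nonneg n).mono fun t ht ht' => (Real.norm_of_nonneg (ht ht')).le
  · exact h_lim.mono fun t ht ht' => (ht ht').summable
  · refine hf.congr_ae ?_
    rw [Filter.EventuallyEq, ae_restrict_iff' measurableSet_uIoc]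
    exact h_lim.mono fun t ht ht' => (ht ht').tsum_eq.symm

theorem intervalIntegrable_rpow_mul_one_sub_rpow {p q : ℝ} (hp : -1 < p) (hq : -1 < q) :
    IntervalIntegrable (fun t : ℝ => t ^ p * (1 - t) ^ q) volume 0 1 := by
  have h := (Complex.betaIntegral_convergent (u := p + 1) (v := q + 1)
    (by simp; linarith) (by simp; linarith)).norm
  simp only [add_sub_cancel_right] at h
  refine h.congr_uIoo fun t ht => ?_
  rw [Set.uIoo_of_le zero_le_one] at ht
  dsimp only
  rw [norm_mul, Complex.norm_cpow_eq_rpow_re_of_pos ht.1, ← Complex.ofReal_one,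
    ← Complex.ofReal_sub, Complex.norm_cpow_eq_rpow_re_of_pos (sub_pos.2 ht.2)]
  simp

theorem integral_rpow_mul_one_sub_rpow {p q : ℝ} (hp : 0 < p) (hq : 0 < q) :
    ∫ t in (0 : ℝ)..1, t ^ (p - 1) * (1 - t) ^ (q - 1) = Gamma p * Gamma q / Gamma (p + q) := by
  have hB : Complex.betaIntegral p q
      = ((∫ t in (0 : ℝ)..1, t ^ (p - 1) * (1 - t) ^ (q - 1) : ℝ) : ℂ) := by
    rw [Complex.betaIntegral, ← intervalIntegral.integral_ofReal]
    refine intervalIntegral.integral_congr fun t ht => ?_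
    rw [Set.uIcc_of_le zero_le_one] at ht
    simp only [Complex.ofReal_mul, Complex.ofReal_cpow ht.1,
      Complex.ofReal_cpow (sub_nonneg.2 ht.2)]
    push_cast
    rfl
  have h := Complex.betaIntegral_eq_Gamma_mul_div p q (by simpa) (by simpa)
  rw [hB, ← Complex.ofReal_add, Complex.Gamma_ofReal, Complex.Gamma_ofReal,
    Complex.Gamma_ofReal] at h
  exact_mod_cast h

theorem hasSum_ascPochhammer_div_factorial_mul_beta_weight (p q a : ℝ) {t : ℝ}
    (ht : t ∈ Set.Ioo (0 : ℝ) 1) :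
    HasSum (fun n => (ascPochhammer ℝ n).eval a / n ! *
        (t ^ (p + a - 1) * (1 - t) ^ (q + a - 1) * (1 - t + t ^ 2) ^ n))
      (t ^ (p - 1) * (1 - t) ^ (q - 1)) := by
  obtain ⟨ht₀, ht₁⟩ := ht
  have ht₁' : 0 < 1 - t := sub_pos.2 ht₁
  have hx : |1 - t + t ^ 2| < 1 := by
    rw [abs_lt]; constructor <;> nlinarith
  have h := (hasSum_ascPochhammer_div_factorial_mul_pow a hx).mul_left
    (t ^ (p + a - 1) * (1 - t) ^ (q + a - 1))
  have hsum : t ^ (p + a - 1) * (1 - t) ^ (q + a - 1) * (1 - (1 - t + t ^ 2)) ^ (-a)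
      = t ^ (p - 1) * (1 - t) ^ (q - 1) := by
    rw [show 1 - (1 - t + t ^ 2) = t * (1 - t) by ring, mul_rpow ht₀.le ht₁'.le,
      mul_mul_mul_comm, ← rpow_add ht₀, ← rpow_add ht₁']
    ring_nf
  rw [hsum] at h
  exact h.congr_fun fun n => by ring

theorem rpow_mul_one_sub_rpow_mul_pow_nonneg (p q : ℝ) (n : ℕ) {t : ℝ}
    (ht : t ∈ Set.Icc (0 : ℝ) 1) : 0 ≤ t ^ p * (1 - t) ^ q * (1 - t + t ^ 2) ^ n := by
  obtain ⟨ht₀, ht₁⟩ := ht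
  have : 0 ≤ 1 - t := sub_nonneg.2 ht₁
  have : 0 ≤ 1 - t + t ^ 2 := by nlinarith
  positivity

theorem hasSum_ascPochhammer_div_factorial_mul_integral {p q a : ℝ} (hp : 0 < p) (hq : 0 < q)
    (ha : 0 ≤ a) :
    HasSum (fun n => (ascPochhammer ℝ n).eval a / n ! *
        ∫ t in (0 : ℝ)..1, t ^ (p + a - 1) * (1 - t) ^ (q + a - 1) * (1 - t + t ^ 2) ^ n)
      (Gamma p * Gamma q / Gamma (p + q)) := by
  simp_rw [← intervalIntegral.integral_const_mul, ← integral_rpow_mul_one_sub_rpow hp hq]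
  refine intervalIntegral.hasSum_integral_of_nonneg (fun n => by fun_prop) ?_
    (intervalIntegrable_rpow_mul_one_sub_rpow (by linarith) (by linarith)) ?_
  · refine fun n => .of_forall fun t ht => mul_nonneg (by
      have := ascPochhammer_eval_nonneg n ha; positivity) ?_
    rw [Set.uIoc_of_le zero_le_one] at ht
    exact rpow_mul_one_sub_rpow_mul_pow_nonneg _ _ n (Set.Ioc_subset_Icc_self ht)
  -- the series diverges at `t = 1`, a null set
  · filter_upwards [measure_eq_zero_iff_ae_notMem.1 (measure_singleton (1 : ℝ))] with t ht₁ ht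
    rw [Set.uIoc_of_le zero_le_one] at ht
    exact hasSum_ascPochhammer_div_factorial_mul_beta_weight p q a
      ⟨ht.1, lt_of_le_of_ne ht.2 ht₁⟩

theorem c_nonneg_sum_one_general (ν μ : ℝ) (hν : 0 < ν) (hμ : 0 < μ) (d : ℕ)
    (c : ℕ → ℝ)
    (hc : ∀ n : ℕ, c n =
      (Real.Gamma (ν + μ) / (Real.Gamma ν * Real.Gamma μ)) *
        ((ascPochhammer ℝ n).eval ((d : ℝ) / 2) / (Nat.factorial n : ℝ)) *
        ∫ t in (0 : ℝ)..1,
          t ^ (μ + (d : ℝ) / 2 - 1) * (1 - t) ^ (ν + (d : ℝ) / 2 - 1) * (1 - t + t ^ 2) ^ n) :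
    (∀ n, 0 ≤ c n) ∧ HasSum c 1 := by
  have ha : (0 : ℝ) ≤ d / 2 := by positivity
  have hΓν := Gamma_pos_of_pos hν
  have hΓμ := Gamma_pos_of_pos hμ
  refine ⟨fun n => ?_, ?_⟩
  · rw [hc]
    have := ascPochhammer_eval_nonneg n ha
    have := intervalIntegral.integral_nonneg (μ := volume) zero_le_one fun _ =>
      rpow_mul_one_sub_rpow_mul_pow_nonneg (μ + d / 2 - 1) (ν + d / 2 - 1) n
    positivity
  · have hB_inv :
        Gamma (ν + μ) / (Gamma ν * Gamma μ) * (Gamma μ * Gamma ν / Gamma (μ + ν)) = 1 := by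
      have := Gamma_pos_of_pos (add_pos hμ hν)
      rw [add_comm ν]; field_simp
    have h := (hasSum_ascPochhammer_div_factorial_mul_integral hμ hν ha).mul_left
      (Gamma (ν + μ) / (Gamma ν * Gamma μ))
    rw [hB_inv] at h
    exact h.congr_fun fun n => by rw [hc, mul_assoc]

theorem c_nonneg_sum_one (ν μ : ℝ) (hν : 0 < ν) (hμ : 0 < μ) (d : ℕ) (hd : 1 ≤ d)
    (c : ℕ → ℝ)
    (hc : ∀ n : ℕ, c n =
      (Real.Gamma (ν + μ) / (Real.Gamma ν * Real.Gamma μ)) *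
        ((ascPochhammer ℝ n).eval ((d : ℝ) / 2) / (Nat.factorial n : ℝ)) *
        ∫ t in (0 : ℝ)..1,
          t ^ (μ + (d : ℝ) / 2 - 1) * (1 - t) ^ (ν + (d : ℝ) / 2 - 1) * (1 - t + t ^ 2) ^ n) :
    (∀ n, 0 ≤ c n) ∧ HasSum c 1 :=
  c_nonneg_sum_one_general ν μ hν hμ d c hc
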